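/- arXiv:2005.02784 — 2 statements merged into one kernel-verified Lean document; each statement's English description precedes it below -/
import Mathlib

section
/- Let u ∈ C and λ ∈ L^∞(0,T;L²(Ω)) satisfy the variational inequality (VI), suppose λ satisfies the pointwise subdifferential conditions for g_T at u, and suppose that ‖d(·,t)‖_{L²(Ω)} ≤ κ for almost every t ∈ (0,T). Then u = 0 almost everywhere in Q. -/
/-!
Test the variational inequality with `v = 0`. For a.e. `t` the subdifferential condition gives
`∫ λ u dx = ‖u(t)‖`, so Cauchy–Schwarz and `‖d(t)‖ ≤ κ` yield
`∫ (d + κλ + νu)(-u) dx = -∫ d u dx - κ‖u(t)‖ - ν‖u(t)‖² ≤ -ν‖u(t)‖² ≤ 0`.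
This function of `t` is bounded, hence integrable, and its integral is nonnegative, so it
vanishes a.e., and with it `‖u(t)‖`.
-/

open MeasureTheory Set

section L2

variable {α : Type*} [MeasurableSpace α] {μ : Measure α}

theorem abs_integral_mul_le_sqrt_mul_sqrt {f g : α → ℝ} (hf : MemLp f 2 μ) (hg : MemLp g 2 μ) :
    |∫ x, f x * g x ∂μ| ≤ √(∫ x, f x ^ 2 ∂μ) * √(∫ x, g x ^ 2 ∂μ) := by
  have holder := integral_mul_le_Lp_mul_Lq_of_nonneg Real.HolderConjugate.two_two
    (ae_of_all μ fun x => abs_nonneg (f x)) (ae_of_all μ fun x => abs_nonneg (g x))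
    (by simpa [Real.norm_eq_abs] using hf.norm) (by simpa [Real.norm_eq_abs] using hg.norm)
  simp only [Real.rpow_two, sq_abs, ← Real.sqrt_eq_rpow] at holder
  calc |∫ x, f x * g x ∂μ| ≤ ∫ x, |f x * g x| ∂μ := abs_integral_le_integral_abs
    _ = ∫ x, |f x| * |g x| ∂μ := by simp only [abs_mul]
    _ ≤ _ := holder

theorem abs_integral_mul_le_of_sqrt_integral_sq_le {f g : α → ℝ} {κ : ℝ} (hf : MemLp f 2 μ)
    (hg : MemLp g 2 μ) (hfκ : √(∫ x, f x ^ 2 ∂μ) ≤ κ) :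
    |∫ x, f x * g x ∂μ| ≤ κ * √(∫ x, g x ^ 2 ∂μ) :=
  (abs_integral_mul_le_sqrt_mul_sqrt hf hg).trans
    (mul_le_mul_of_nonneg_right hfκ (Real.sqrt_nonneg _))

theorem integral_sq_le_of_abs_le [IsFiniteMeasure μ] {u : α → ℝ} {C : ℝ}
    (hu : ∀ᵐ x ∂μ, |u x| ≤ C) : ∫ x, u x ^ 2 ∂μ ≤ C ^ 2 * μ.real univ := by
  calc ∫ x, u x ^ 2 ∂μ ≤ ∫ _, C ^ 2 ∂μ :=
        integral_mono_of_nonneg (ae_of_all μ fun x => sq_nonneg (u x)) (integrable_const _)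
          (by filter_upwards [hu] with x hx using sq_le_sq' (abs_le.1 hx).1 (abs_le.1 hx).2)
    _ = C ^ 2 * μ.real univ := by rw [integral_const, smul_eq_mul, mul_comm]

theorem ae_eq_zero_iff_integral_sq_eq_zero {u : α → ℝ} (hu : MemLp u 2 μ) :
    (∀ᵐ x ∂μ, u x = 0) ↔ ∫ x, u x ^ 2 ∂μ = 0 := by
  rw [integral_eq_zero_iff_of_nonneg (fun x => sq_nonneg (u x)) hu.integrable_sq]
  simp only [Filter.EventuallyEq, Pi.zero_apply, sq_eq_zero_iff]

theorem ae_eq_zero_of_nonpos_of_integral_nonneg {G : α → ℝ} (hG : Integrable G μ)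
    (hG_nonpos : ∀ᵐ x ∂μ, G x ≤ 0) (h : 0 ≤ ∫ x, G x ∂μ) : G =ᵐ[μ] 0 := by
  have hneg : -G =ᵐ[μ] 0 := by
    refine (integral_eq_zero_iff_of_nonneg_ae ?_ hG.neg).1 ?_
    · filter_upwards [hG_nonpos] with x hx using neg_nonneg.2 hx
    · rw [integral_neg']
      linarith [integral_nonpos_of_ae hG_nonpos]
  filter_upwards [hneg] with x hx using neg_eq_zero.1 hx

theorem ae_eq_zero_of_add_mul_nonpos_of_integral_nonneg {G H : α → ℝ} {ν : ℝ} (hν : 0 < ν)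
    (hG : Integrable G μ) (hH : ∀ x, 0 ≤ H x) (hGH : ∀ᵐ x ∂μ, G x + ν * H x ≤ 0)
    (h : 0 ≤ ∫ x, G x ∂μ) : H =ᵐ[μ] 0 := by
  have hG_zero : G =ᵐ[μ] 0 := by
    refine ae_eq_zero_of_nonpos_of_integral_nonneg hG ?_ h
    filter_upwards [hGH] with x hx
    nlinarith [hH x]
  filter_upwards [hGH, hG_zero] with x hGHx hGx
  have : ν * H x ≤ 0 := by simpa [hGx] using hGHx
  exact le_antisymm (nonpos_of_mul_nonpos_right this hν) (hH x)

end L2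

section Slices

variable {α β : Type*} [MeasurableSpace α] [MeasurableSpace β] {μ : Measure α} {ν : Measure β}
  [SFinite μ] [SFinite ν]

theorem ae_prod_iff_ae_ae_swap {p : α × β → Prop} (hp : MeasurableSet {z | p z}) :
    (∀ᵐ z ∂μ.prod ν, p z) ↔ ∀ᵐ y ∂ν, ∀ᵐ x ∂μ, p (x, y) :=
  (Measure.ae_prod_iff_ae_ae hp).trans (Measure.ae_ae_comm (p := fun x y => p (x, y)) hp)

theorem MeasureTheory.MemLp.ae_memLp_two_prodMk_right {f : α × β → ℝ}
    (hf : MemLp f 2 (μ.prod ν)) :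
    ∀ᵐ y ∂ν, MemLp (fun x => f (x, y)) 2 μ := by
  filter_upwards [hf.aestronglyMeasurable.prodMk_right, hf.integrable_sq.prod_left_ae]
    with y hmeas hsq
  exact (memLp_two_iff_integrable_sq hmeas).2 hsq

theorem ae_memLp_two_and_integral_sq_le_of_ae_prod_mem_Icc [IsFiniteMeasure μ] {f : α × β → ℝ}
    (hf : Measurable f) {a b : ℝ} (h : ∀ᵐ z ∂μ.prod ν, a ≤ f z ∧ f z ≤ b) :
    ∀ᵐ y ∂ν, MemLp (fun x => f (x, y)) 2 μ ∧
      ∫ x, f (x, y) ^ 2 ∂μ ≤ max |a| |b| ^ 2 * μ.real univ := by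
  filter_upwards [(ae_prod_iff_ae_ae_swap ((measurableSet_le measurable_const hf).inter
    (measurableSet_le hf measurable_const))).1 h] with y hy
  have hbdd : ∀ᵐ x ∂μ, |f (x, y)| ≤ max |a| |b| := by
    filter_upwards [hy] with x hx using abs_le_max_abs_abs hx.1 hx.2
  exact ⟨MemLp.of_bound (hf.comp measurable_prodMk_right).aestronglyMeasurable _
    (by simpa only [Real.norm_eq_abs] using hbdd), integral_sq_le_of_abs_le hbdd⟩

theorem MeasureTheory.AEStronglyMeasurable.integral_prod_left' {f : α × β → ℝ}
    (hf : AEStronglyMeasurable f (μ.prod ν)) :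
    AEStronglyMeasurable (fun y => ∫ x, f (x, y) ∂μ) ν :=
  hf.prod_swap.integral_prod_right'

end Slices

section Subdifferential

variable {α : Type*} [MeasurableSpace α] {μ : Measure α} {κ ν : ℝ} {d u l : α → ℝ}

theorem integral_mul_neg_eq_of_subdifferential (hd : MemLp d 2 μ) (hu : MemLp u 2 μ)
    (hl : ¬ (∀ᵐ x ∂μ, u x = 0) → ∀ᵐ x ∂μ, l x = u x / √(∫ y, u y ^ 2 ∂μ)) :
    ∫ x, (d x + κ * l x + ν * u x) * (0 - u x) ∂μ
      = -∫ x, d x * u x ∂μ - κ * √(∫ x, u x ^ 2 ∂μ) - ν * ∫ x, u x ^ 2 ∂μ := by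
  by_cases hz : ∀ᵐ x ∂μ, u x = 0
  · have hH : ∫ x, u x ^ 2 ∂μ = 0 := (ae_eq_zero_iff_integral_sq_eq_zero hu).1 hz
    have hdu : ∫ x, d x * u x ∂μ = 0 :=
      integral_eq_zero_of_ae (by filter_upwards [hz] with x hx; simp [hx])
    rw [integral_eq_zero_of_ae (by filter_upwards [hz] with x hx; simp [hx]), hH, hdu]
    simp
  · set N := √(∫ x, u x ^ 2 ∂μ)
    have hN : 0 < N := Real.sqrt_pos.2 <| lt_of_le_of_ne
      (integral_nonneg fun x => sq_nonneg (u x))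
      (Ne.symm (mt (ae_eq_zero_iff_integral_sq_eq_zero hu).2 hz))
    have hint : (fun x => (d x + κ * l x + ν * u x) * (0 - u x))
        =ᵐ[μ] fun x => -(d x * u x) - (κ / N + ν) * u x ^ 2 := by
      filter_upwards [hl hz] with x hx
      rw [hx]
      field_simp
      ring
    rw [integral_congr_ae hint, integral_sub
      (show Integrable (fun x => -(d x * u x)) μ from (hd.integrable_mul hu).neg)
      (hu.integrable_sq.const_mul _), integral_neg, integral_const_mul,
      ← Real.sq_sqrt (integral_nonneg fun x => sq_nonneg (u x))]
    field_simp
    ring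

theorem integral_mul_neg_add_le_zero_of_subdifferential (hd : MemLp d 2 μ) (hu : MemLp u 2 μ)
    (hdκ : √(∫ x, d x ^ 2 ∂μ) ≤ κ)
    (hl : ¬ (∀ᵐ x ∂μ, u x = 0) → ∀ᵐ x ∂μ, l x = u x / √(∫ y, u y ^ 2 ∂μ)) :
    ∫ x, (d x + κ * l x + ν * u x) * (0 - u x) ∂μ + ν * ∫ x, u x ^ 2 ∂μ ≤ 0 := by
  have hdu := abs_integral_mul_le_of_sqrt_integral_sq_le hd hu hdκ
  rw [integral_mul_neg_eq_of_subdifferential hd hu hl]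
  linarith [neg_abs_le (∫ x, d x * u x ∂μ)]

theorem abs_integral_mul_neg_le_of_subdifferential (hd : MemLp d 2 μ) (hu : MemLp u 2 μ)
    (hdκ : √(∫ x, d x ^ 2 ∂μ) ≤ κ)
    (hl : ¬ (∀ᵐ x ∂μ, u x = 0) → ∀ᵐ x ∂μ, l x = u x / √(∫ y, u y ^ 2 ∂μ)) :
    |∫ x, (d x + κ * l x + ν * u x) * (0 - u x) ∂μ|
      ≤ 2 * κ * √(∫ x, u x ^ 2 ∂μ) + |ν| * ∫ x, u x ^ 2 ∂μ := by
  have hdu := abs_integral_mul_le_of_sqrt_integral_sq_le hd hu hdκ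
  have hκN : 0 ≤ κ * √(∫ x, u x ^ 2 ∂μ) :=
    mul_nonneg ((Real.sqrt_nonneg _).trans hdκ) (Real.sqrt_nonneg _)
  have hνH : |ν * ∫ x, u x ^ 2 ∂μ| ≤ |ν| * ∫ x, u x ^ 2 ∂μ := by
    rw [abs_mul, abs_of_nonneg (integral_nonneg fun x => sq_nonneg (u x))]
  rw [integral_mul_neg_eq_of_subdifferential hd hu hl]
  obtain ⟨hdu_lo, hdu_hi⟩ := abs_le.1 hdu
  obtain ⟨hνH_lo, hνH_hi⟩ := abs_le.1 hνH
  exact abs_le.2 ⟨by linarith, by linarith⟩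

end Subdifferential

theorem sparsity_in_time_vanishing_general
    (Ω : Set (Fin 3 → ℝ)) (hΩb : Bornology.IsBounded Ω)
    (T : ℝ)
    (ub uh κ ν : ℝ) (hub : ub < 0) (huh : 0 < uh) (hν : 0 < ν)
    (d u l : (Fin 3 → ℝ) → ℝ → ℝ)
    (hd : MemLp (fun p : (Fin 3 → ℝ) × ℝ => d p.1 p.2) 2
      ((volume.restrict Ω).prod (volume.restrict (Ioo 0 T))))
    (hu_meas : Measurable (fun p : (Fin 3 → ℝ) × ℝ => u p.1 p.2))
    (hu_mem : ∀ᵐ p ∂((volume.restrict Ω).prod (volume.restrict (Ioo 0 T))),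
      ub ≤ u p.1 p.2 ∧ u p.1 p.2 ≤ uh)
    (hl_meas : Measurable (fun p : (Fin 3 → ℝ) × ℝ => l p.1 p.2))
    (hVI : ∀ v : (Fin 3 → ℝ) → ℝ → ℝ,
      Measurable (fun p : (Fin 3 → ℝ) × ℝ => v p.1 p.2) →
      (∀ᵐ p ∂((volume.restrict Ω).prod (volume.restrict (Ioo 0 T))),
        ub ≤ v p.1 p.2 ∧ v p.1 p.2 ≤ uh) →
      0 ≤ ∫ t in Ioo 0 T, ∫ x in Ω,
        (d x t + κ * l x t + ν * u x t) * (v x t - u x t))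
    (hsub : ∀ᵐ t ∂(volume.restrict (Ioo 0 T)),
      ((∀ᵐ x ∂(volume.restrict Ω), u x t = 0) →
        Real.sqrt (∫ x in Ω, (l x t) ^ 2) ≤ 1) ∧
      (¬ (∀ᵐ x ∂(volume.restrict Ω), u x t = 0) →
        ∀ᵐ x ∂(volume.restrict Ω),
          l x t = u x t / Real.sqrt (∫ y in Ω, (u y t) ^ 2)))
    (hdsmall : ∀ᵐ t ∂(volume.restrict (Ioo 0 T)),
      Real.sqrt (∫ x in Ω, (d x t) ^ 2) ≤ κ) :
    ∀ᵐ p ∂((volume.restrict Ω).prod (volume.restrict (Ioo 0 T))),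
      u p.1 p.2 = 0 := by
  set μ := volume.restrict Ω
  set τ := volume.restrict (Ioo 0 T)
  have : IsFiniteMeasure μ := isFiniteMeasure_restrict.2 hΩb.measure_lt_top.ne
  set G : ℝ → ℝ := fun t => ∫ x, (d x t + κ * l x t + ν * u x t) * (0 - u x t) ∂μ
  set H : ℝ → ℝ := fun t => ∫ x, u x t ^ 2 ∂μ
  have hH_nonneg : ∀ t, 0 ≤ H t := fun t => integral_nonneg fun x => sq_nonneg (u x t)
  set V := max |ub| |uh| ^ 2 * μ.real univ
  have hu_slices : ∀ᵐ t ∂τ, MemLp (fun x => u x t) 2 μ ∧ H t ≤ V :=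
    ae_memLp_two_and_integral_sq_le_of_ae_prod_mem_Icc hu_meas hu_mem
  have hGH : ∀ᵐ t ∂τ, G t + ν * H t ≤ 0 ∧ |G t| ≤ 2 * κ * √V + |ν| * V := by
    filter_upwards [hd.ae_memLp_two_prodMk_right, hu_slices, hdsmall, hsub]
      with t hdt ⟨hut, hHt⟩ hdκ hlt
    refine ⟨integral_mul_neg_add_le_zero_of_subdifferential hdt hut hdκ hlt.2,
      (abs_integral_mul_neg_le_of_subdifferential hdt hut hdκ hlt.2).trans ?_⟩
    have hκ : 0 ≤ κ := (Real.sqrt_nonneg _).trans hdκ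
    gcongr
  have hG_meas : AEStronglyMeasurable G τ := by
    have := hd.aestronglyMeasurable
    exact AEStronglyMeasurable.integral_prod_left'
      (f := fun p => (d p.1 p.2 + κ * l p.1 p.2 + ν * u p.1 p.2) * (0 - u p.1 p.2)) (by fun_prop)
  have hG_int : Integrable G τ := Integrable.of_bound hG_meas _
    (by filter_upwards [hGH] with t ht using ht.2)
  have hH_zero : H =ᵐ[τ] 0 := ae_eq_zero_of_add_mul_nonpos_of_integral_nonneg hν hG_int
    hH_nonneg (by filter_upwards [hGH] with t ht using ht.1)
    (hVI (fun _ _ => 0) measurable_const (ae_of_all _ fun _ => ⟨hub.le, huh.le⟩))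
  refine (ae_prod_iff_ae_ae_swap (measurableSet_eq_fun hu_meas measurable_const)).2 ?_
  filter_upwards [hH_zero, hu_slices] with t hHt hut
  exact (ae_eq_zero_iff_integral_sq_eq_zero hut.1).2 hHt

/-- If `u ∈ C` and `λ` satisfy the variational inequality, `λ` satisfies the
pointwise subdifferential conditions for `g_T` at `u`, and
`‖d(·,t)‖_{L²(Ω)} ≤ κ` for a.e. `t ∈ (0,T)`, then `u = 0` a.e. in `Q`. -/
theorem sparsity_in_time_vanishing
    (Ω : Set (Fin 3 → ℝ)) (hΩo : IsOpen Ω) (hΩb : Bornology.IsBounded Ω)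
    (T : ℝ) (hT : 0 < T)
    (ub uh κ ν : ℝ) (hub : ub < 0) (huh : 0 < uh) (hκ : 0 < κ) (hν : 0 < ν)
    (d u l : (Fin 3 → ℝ) → ℝ → ℝ)
    (hd : MemLp (fun p : (Fin 3 → ℝ) × ℝ => d p.1 p.2) 2
      ((volume.restrict Ω).prod (volume.restrict (Ioo 0 T))))
    (hu_meas : Measurable (fun p : (Fin 3 → ℝ) × ℝ => u p.1 p.2))
    (hu_mem : ∀ᵐ p ∂((volume.restrict Ω).prod (volume.restrict (Ioo 0 T))),
      ub ≤ u p.1 p.2 ∧ u p.1 p.2 ≤ uh)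
    (hl_meas : Measurable (fun p : (Fin 3 → ℝ) × ℝ => l p.1 p.2))
    (hl_bdd : ∃ M : ℝ, ∀ᵐ t ∂(volume.restrict (Ioo 0 T)),
      Real.sqrt (∫ x in Ω, (l x t) ^ 2) ≤ M)
    (hVI : ∀ v : (Fin 3 → ℝ) → ℝ → ℝ,
      Measurable (fun p : (Fin 3 → ℝ) × ℝ => v p.1 p.2) →
      (∀ᵐ p ∂((volume.restrict Ω).prod (volume.restrict (Ioo 0 T))),
        ub ≤ v p.1 p.2 ∧ v p.1 p.2 ≤ uh) →
      0 ≤ ∫ t in Ioo 0 T, ∫ x in Ω,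
        (d x t + κ * l x t + ν * u x t) * (v x t - u x t))
    (hsub : ∀ᵐ t ∂(volume.restrict (Ioo 0 T)),
      ((∀ᵐ x ∂(volume.restrict Ω), u x t = 0) →
        Real.sqrt (∫ x in Ω, (l x t) ^ 2) ≤ 1) ∧
      (¬ (∀ᵐ x ∂(volume.restrict Ω), u x t = 0) →
        ∀ᵐ x ∂(volume.restrict Ω),
          l x t = u x t / Real.sqrt (∫ y in Ω, (u y t) ^ 2)))
    (hdsmall : ∀ᵐ t ∂(volume.restrict (Ioo 0 T)),
      Real.sqrt (∫ x in Ω, (d x t) ^ 2) ≤ κ) :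
    ∀ᵐ p ∂((volume.restrict Ω).prod (volume.restrict (Ioo 0 T))),
      u p.1 p.2 = 0 :=
  sparsity_in_time_vanishing_general Ω hΩb T ub uh κ ν hub huh hν d u l hd hu_meas hu_mem hl_meas
    hVI hsub hdsmall
end

section
/- Let u ∈ C and λ ∈ L^∞(0,T;L²(Ω)) satisfy the variational inequality (VI), and suppose λ satisfies the pointwise subdifferential conditions for g_T at u. Then for almost every t ∈ (0,T) such that u(·,t) = 0 almost everywhere in Ω, one has d(x,t) + κλ(x,t) = 0 for almost every x ∈ Ω. -/
/-!
On the times where `u(·,t) = 0` the state lies strictly inside the box `[ū, û]`, so `u + ψ` is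
admissible for every perturbation `ψ` with `|ψ| ≤ min(û, -ū)` supported on those times, and there
the variational inequality reads `0 ≤ ∫ (d + κλ) ψ`. The choice `ψ = -δ sign(d + κλ)` on pieces of
finite measure where `d + κλ` is bounded makes the integrand `-δ |d + κλ| ≤ 0`, so `d + κλ = 0`.
-/

open MeasureTheory Set Function

theorem measurable_sign_real : Measurable fun r : ℝ => (SignType.sign r : ℝ) := by
  have : (fun r : ℝ => (SignType.sign r : ℝ)) =
      fun r => if 0 < r then 1 else if r < 0 then -1 else 0 := by
    funext r
    rw [sign_apply]
    split_ifs <;> rfl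
  rw [this]
  exact Measurable.ite measurableSet_Ioi measurable_const
    (Measurable.ite measurableSet_Iio measurable_const measurable_const)

theorem abs_sign_le_one {R : Type*} [Ring R] [LinearOrder R] [IsStrictOrderedRing R] (r : R) :
    |(SignType.sign r : R)| ≤ 1 := by
  rcases lt_trichotomy r 0 with h | rfl | h <;> simp [*]

section SignTest

variable {α : Type*} [MeasurableSpace α] {μ : Measure α} {w : α → ℝ} {δ : ℝ}

theorem ae_eq_zero_on_of_forall_integral_mul_nonneg_of_bounded {A : Set α} {M : ℝ}
    (hw : Measurable w) (hA : MeasurableSet A) (hμA : μ A ≠ ⊤) (hwA : ∀ x ∈ A, |w x| ≤ M)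
    (hδ : 0 < δ)
    (h : ∀ ψ : α → ℝ, Measurable ψ → (∀ x, |ψ x| ≤ δ) → (∀ x ∉ A, ψ x = 0) →
      Integrable (fun x => w x * ψ x) μ → 0 ≤ ∫ x, w x * ψ x ∂μ) :
    ∀ᵐ x ∂μ, x ∈ A → w x = 0 := by
  set f : α → ℝ := fun x => δ * |w x|
  have hf_int : IntegrableOn f A μ :=
    Measure.integrableOn_of_bounded (M := δ * M) hμA (hw.abs.const_mul δ).aestronglyMeasurable
      ((ae_restrict_iff' hA).2 <| ae_of_all _ fun x hx => by
        simpa [f, abs_of_pos hδ] using mul_le_mul_of_nonneg_left (hwA x hx) hδ.le)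
  have hwψ : (fun x => w x * A.indicator (fun x => -δ * SignType.sign (w x)) x) =
      fun x => -A.indicator f x := by
    funext x
    by_cases hx : x ∈ A
    · simp only [indicator_of_mem hx, f, ← self_mul_sign (w x)]; ring
    · simp [indicator_of_notMem hx]
  have hψ := h (A.indicator fun x => -δ * SignType.sign (w x))
    ((measurable_sign_real.comp hw).const_mul (-δ) |>.indicator hA)
    (fun x => by
      by_cases hx : x ∈ A
      · simpa [indicator_of_mem hx, abs_mul, abs_of_pos hδ] using
          mul_le_mul_of_nonneg_left (abs_sign_le_one (w x)) hδ.le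
      · simp [indicator_of_notMem hx, hδ.le])
    (fun x hx => indicator_of_notMem hx _)
    (by rw [hwψ]; exact (hf_int.integrable_indicator hA).neg)
  rw [hwψ, integral_neg, integral_indicator hA, neg_nonneg] at hψ
  have hf0 : f =ᵐ[μ.restrict A] 0 :=
    (setIntegral_eq_zero_iff_of_nonneg_ae (ae_of_all _ fun x => by positivity) hf_int).1
      (le_antisymm hψ (setIntegral_nonneg hA fun x _ => by positivity))
  filter_upwards [(ae_restrict_iff' hA).1 hf0] with x hx hxA
  simpa [f, hδ.ne'] using hx hxA

theorem ae_eq_zero_on_of_forall_integral_mul_nonneg [SigmaFinite μ] {S : Set α}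
    (hw : Measurable w) (hS : MeasurableSet S) (hδ : 0 < δ)
    (h : ∀ ψ : α → ℝ, Measurable ψ → (∀ x, |ψ x| ≤ δ) → (∀ x ∉ S, ψ x = 0) →
      Integrable (fun x => w x * ψ x) μ → 0 ≤ ∫ x, w x * ψ x ∂μ) :
    ∀ᵐ x ∂μ, x ∈ S → w x = 0 := by
  set A : ℕ → Set α := fun n => S ∩ {x | |w x| ≤ n} ∩ spanningSets μ n
  have hA : ∀ n, ∀ᵐ x ∂μ, x ∈ A n → w x = 0 := fun n =>
    ae_eq_zero_on_of_forall_integral_mul_nonneg_of_bounded hw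
      ((hS.inter (measurableSet_le hw.abs measurable_const)).inter
        (measurableSet_spanningSets μ n))
      ((measure_mono inter_subset_right).trans_lt (measure_spanningSets_lt_top μ n)).ne
      (fun x hx => hx.1.2) hδ
      fun ψ hψ hψδ hψA => h ψ hψ hψδ fun x hxS => hψA x fun hxA => hxS hxA.1.1
  filter_upwards [ae_all_iff.2 hA] with x hx hxS
  obtain ⟨n, hn⟩ := exists_nat_ge |w x|
  refine hx (max n (spanningSetsIndex μ x)) ⟨⟨hxS, ?_⟩, ?_⟩
  · exact hn.trans (by exact_mod_cast le_max_left _ _)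
  · exact monotone_spanningSets μ (le_max_right _ _) (mem_spanningSetsIndex μ x)

end SignTest

section Product

variable {X Y : Type*} [MeasurableSpace X] [MeasurableSpace Y] {μ : Measure X} {ν : Measure Y}

theorem ae_ae_of_ae_prod_swap [SFinite μ] [SFinite ν] {P : X × Y → Prop}
    (h : ∀ᵐ p ∂μ.prod ν, P p) : ∀ᵐ y ∂ν, ∀ᵐ x ∂μ, P (x, y) :=
  Measure.ae_ae_of_ae_prod (Measure.measurePreserving_swap.quasiMeasurePreserving.ae h)

theorem measurableSet_setOf_ae_eq_zero [SFinite μ] {u : X → Y → ℝ}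
    (hu : Measurable (uncurry u)) : MeasurableSet {y | ∀ᵐ x ∂μ, u x y = 0} := by
  have : {y | ∀ᵐ x ∂μ, u x y = 0} =
      (fun y => μ ((fun x => (x, y)) ⁻¹' {p | uncurry u p ≠ 0})) ⁻¹' {0} := by
    ext y; simp [ae_iff]
  rw [this]
  exact measurable_measure_prodMk_right (hu (measurableSet_singleton 0).compl)
    (measurableSet_singleton 0)

theorem ae_prod_eq_zero_of_mem_setOf_ae_eq_zero [SFinite μ] [SFinite ν] {u : X → Y → ℝ}
    (hu : Measurable (uncurry u)) :
    ∀ᵐ p ∂μ.prod ν, p.2 ∈ {y | ∀ᵐ x ∂μ, u x y = 0} → u p.1 p.2 = 0 := by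
  have hmeas : MeasurableSet {p : X × Y | p.2 ∈ {y | ∀ᵐ x ∂μ, u x y = 0} → u p.1 p.2 = 0} :=
    ((measurableSet_setOf_ae_eq_zero hu).preimage measurable_snd).imp
      (hu (measurableSet_singleton 0))
  rw [Measure.ae_prod_iff_ae_ae hmeas, Measure.ae_ae_comm hmeas]
  refine ae_of_all _ fun y => ?_
  dsimp only
  exact Filter.eventually_imp_distrib_left.2 id

theorem ae_eq_zero_of_variational_inequality [SigmaFinite μ] [SigmaFinite ν]
    {a u : X → Y → ℝ} {lo hi : ℝ} (hlo : lo < 0) (hhi : 0 < hi)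
    (hu : Measurable (uncurry u)) (ha : AEStronglyMeasurable (uncurry a) (μ.prod ν))
    (hu_mem : ∀ᵐ p ∂μ.prod ν, lo ≤ u p.1 p.2 ∧ u p.1 p.2 ≤ hi)
    (hVI : ∀ v : X → Y → ℝ, Measurable (uncurry v) →
      (∀ᵐ p ∂μ.prod ν, lo ≤ v p.1 p.2 ∧ v p.1 p.2 ≤ hi) →
      0 ≤ ∫ y, ∫ x, a x y * (v x y - u x y) ∂μ ∂ν) :
    ∀ᵐ y ∂ν, (∀ᵐ x ∂μ, u x y = 0) → ∀ᵐ x ∂μ, a x y = 0 := by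
  set S := {y | ∀ᵐ x ∂μ, u x y = 0}
  have hu0 := ae_prod_eq_zero_of_mem_setOf_ae_eq_zero (μ := μ) (ν := ν) hu
  set δ := min hi (-lo)
  have hδ : 0 < δ := lt_min hhi (neg_pos.2 hlo)
  have key : ∀ᵐ p ∂μ.prod ν, p ∈ Prod.snd ⁻¹' S → ha.mk _ p = 0 := by
    refine ae_eq_zero_on_of_forall_integral_mul_nonneg ha.measurable_mk
      (measurable_snd (measurableSet_setOf_ae_eq_zero hu)) hδ fun ψ hψ hψδ hψS hint => ?_
    have hv_mem : ∀ᵐ p ∂μ.prod ν, lo ≤ u p.1 p.2 + ψ p ∧ u p.1 p.2 + ψ p ≤ hi := by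
      filter_upwards [hu_mem, hu0] with p hp hp0
      by_cases hpS : p.2 ∈ S
      · have := abs_le.1 (hψδ p)
        rw [hp0 hpS, zero_add]
        constructor <;> linarith [min_le_left hi (-lo), min_le_right hi (-lo)]
      · rw [hψS p hpS, add_zero]
        exact hp
    have hae : (fun p => a p.1 p.2 * ψ p) =ᵐ[μ.prod ν] fun p => ha.mk _ p * ψ p :=
      ha.ae_eq_mk.mono fun p hp => by simp only [← hp, uncurry]
    have := hVI (fun x y => u x y + ψ (x, y)) (hu.add hψ) hv_mem
    simp only [add_sub_cancel_left] at this
    -- Only for an integrable integrand is the iterated integral of the variational inequality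
    -- the product integral; hence the restriction to test functions with `a ψ` integrable.
    rwa [← integral_congr_ae hae, integral_prod_symm _ (hint.congr hae.symm)]
  filter_upwards [ae_ae_of_ae_prod_swap (key.and ha.ae_eq_mk)] with y hy hyS
  filter_upwards [hy] with x hx
  exact hx.2.trans (hx.1 hyS)

end Product

theorem sparsity_in_time_gradient_equation_general
    (Ω : Set (Fin 3 → ℝ))
    (T : ℝ)
    (ub uh κ ν : ℝ) (hub : ub < 0) (huh : 0 < uh)
    (d u l : (Fin 3 → ℝ) → ℝ → ℝ)
    (hd : MemLp (fun p : (Fin 3 → ℝ) × ℝ => d p.1 p.2) 2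
      ((volume.restrict Ω).prod (volume.restrict (Ioo 0 T))))
    (hu_meas : Measurable (fun p : (Fin 3 → ℝ) × ℝ => u p.1 p.2))
    (hu_mem : ∀ᵐ p ∂((volume.restrict Ω).prod (volume.restrict (Ioo 0 T))),
      ub ≤ u p.1 p.2 ∧ u p.1 p.2 ≤ uh)
    (hl_meas : Measurable (fun p : (Fin 3 → ℝ) × ℝ => l p.1 p.2))
    (hVI : ∀ v : (Fin 3 → ℝ) → ℝ → ℝ,
      Measurable (fun p : (Fin 3 → ℝ) × ℝ => v p.1 p.2) →
      (∀ᵐ p ∂((volume.restrict Ω).prod (volume.restrict (Ioo 0 T))),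
        ub ≤ v p.1 p.2 ∧ v p.1 p.2 ≤ uh) →
      0 ≤ ∫ t in Ioo 0 T, ∫ x in Ω,
        (d x t + κ * l x t + ν * u x t) * (v x t - u x t)) :
    ∀ᵐ t ∂(volume.restrict (Ioo 0 T)),
      (∀ᵐ x ∂(volume.restrict Ω), u x t = 0) →
        ∀ᵐ x ∂(volume.restrict Ω), d x t + κ * l x t = 0 := by
  have hgrad := ae_eq_zero_of_variational_inequality
    (a := fun x t => d x t + κ * l x t + ν * u x t) hub huh hu_meas
    (hd.aestronglyMeasurable.add (hl_meas.const_mul κ).aestronglyMeasurable |>.add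
      (hu_meas.const_mul ν).aestronglyMeasurable) hu_mem hVI
  filter_upwards [hgrad] with t ht hu0
  filter_upwards [ht hu0, hu0] with x hx hux
  simpa [hux] using hx

/-- If `u ∈ C` and `λ` satisfy the variational inequality and `λ` satisfies
the pointwise subdifferential conditions for `g_T` at `u`, then for a.e.
`t ∈ (0,T)` with `u(·,t) = 0` a.e. in `Ω`, one has `d(·,t) + κλ(·,t) = 0`
a.e. in `Ω`. -/
theorem sparsity_in_time_gradient_equation
    (Ω : Set (Fin 3 → ℝ)) (hΩo : IsOpen Ω) (hΩb : Bornology.IsBounded Ω)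
    (T : ℝ) (hT : 0 < T)
    (ub uh κ ν : ℝ) (hub : ub < 0) (huh : 0 < uh) (hκ : 0 < κ) (hν : 0 < ν)
    (d u l : (Fin 3 → ℝ) → ℝ → ℝ)
    (hd : MemLp (fun p : (Fin 3 → ℝ) × ℝ => d p.1 p.2) 2
      ((volume.restrict Ω).prod (volume.restrict (Ioo 0 T))))
    (hu_meas : Measurable (fun p : (Fin 3 → ℝ) × ℝ => u p.1 p.2))
    (hu_mem : ∀ᵐ p ∂((volume.restrict Ω).prod (volume.restrict (Ioo 0 T))),
      ub ≤ u p.1 p.2 ∧ u p.1 p.2 ≤ uh)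
    (hl_meas : Measurable (fun p : (Fin 3 → ℝ) × ℝ => l p.1 p.2))
    (hl_bdd : ∃ M : ℝ, ∀ᵐ t ∂(volume.restrict (Ioo 0 T)),
      Real.sqrt (∫ x in Ω, (l x t) ^ 2) ≤ M)
    (hVI : ∀ v : (Fin 3 → ℝ) → ℝ → ℝ,
      Measurable (fun p : (Fin 3 → ℝ) × ℝ => v p.1 p.2) →
      (∀ᵐ p ∂((volume.restrict Ω).prod (volume.restrict (Ioo 0 T))),
        ub ≤ v p.1 p.2 ∧ v p.1 p.2 ≤ uh) →
      0 ≤ ∫ t in Ioo 0 T, ∫ x in Ω,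
        (d x t + κ * l x t + ν * u x t) * (v x t - u x t))
    (hsub : ∀ᵐ t ∂(volume.restrict (Ioo 0 T)),
      ((∀ᵐ x ∂(volume.restrict Ω), u x t = 0) →
        Real.sqrt (∫ x in Ω, (l x t) ^ 2) ≤ 1) ∧
      (¬ (∀ᵐ x ∂(volume.restrict Ω), u x t = 0) →
        ∀ᵐ x ∂(volume.restrict Ω),
          l x t = u x t / Real.sqrt (∫ y in Ω, (u y t) ^ 2))) :
    ∀ᵐ t ∂(volume.restrict (Ioo 0 T)),
      (∀ᵐ x ∂(volume.restrict Ω), u x t = 0) →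
        ∀ᵐ x ∂(volume.restrict Ω), d x t + κ * l x t = 0 :=
  sparsity_in_time_gradient_equation_general Ω T ub uh κ ν hub huh d u l hd hu_meas hu_mem hl_meas
    hVI
end
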